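/- There is an indexed family 𝓒𝓢𝓓 (the column self-describing sets) that is PRT[O]-learnable but not PRT[T]-learnable. Concretely, with a_n = n + 1 + Σ_{i<n} p_i(a_i) (where p_i is the polynomial with code i), A_n = [0,a_n]⊗{p_n(a_n)} ∪ ⋃_{i<p_n(a_n)} [0,a_n+i]⊗{i}, and B_{n,i} = ⋃_{j≤i} [0,a_n+j]⊗{j} for i < p_n(a_n), the family 𝓒𝓢𝓓 defined by F_{a_i} = A_i and F_{a_i+j} = B_{i,j} for 0 < j < p_i(a_i) is PRT[O]-learnable but not PRT[T]-learnable. -/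

import Mathlib

/-!
Common framework: indexed families of c.e. sets, enumerations (texts),
learning machines with run-time, membership-oracle machines, teachers,
and the learning criteria PRT/PSD/PMC/PCS with oracle/teacher variants.
-/

namespace TeachLearn

attribute [local instance] Classical.propDecidable

/-- The initial segment (finite string) of length `n` of the infinite sequence `f`. -/
def str (f : ℕ → ℕ) (n : ℕ) : List ℕ := (List.range n).map f

/-- `f` is an enumeration (a text) of the set `A`: its set of values is exactly `A`. -/
def IsEnum (f : ℕ → ℕ) (A : Set ℕ) : Prop := Set.range f = A

/-- An indexed family: a uniformly computably enumerable sequence of nonempty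
subsets of `ℕ`. -/
structure IndexedFamily where
  F : ℕ → Set ℕ
  nonempty : ∀ n, (F n).Nonempty
  uce : REPred fun p : ℕ × ℕ => p.1 ∈ F p.2

namespace IndexedFamily

/-- `A` is a member of the indexed family `𝓕`. -/
def Mem (𝓕 : IndexedFamily) (A : Set ℕ) : Prop := ∃ n, 𝓕.F n = A

/-- The minimal index of `A` in the indexed family `𝓕`. -/
noncomputable def mi (𝓕 : IndexedFamily) (A : Set ℕ) : ℕ := sInf {n | 𝓕.F n = A}

end IndexedFamily

/-- A learning machine: a partial computable map from finite strings to
hypotheses, together with a (cumulative) run-time function.  The run-time is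
defined exactly when the machine halts, dominates the length of the input read
as well as the size of the output produced, and is monotone along prefixes
(time is accumulated while reading an enumeration). -/
structure Machine where
  eval : List ℕ →. ℕ
  partrec : Partrec eval
  time : List ℕ →. ℕ
  time_dom : ∀ σ, (time σ).Dom ↔ (eval σ).Dom
  length_le_time : ∀ ⦃σ t⦄, t ∈ time σ → σ.length ≤ t
  size_le_time : ∀ ⦃σ t h⦄, t ∈ time σ → h ∈ eval σ → Nat.size h ≤ t
  time_mono : ∀ ⦃σ τ s t⦄, σ <+: τ → s ∈ time σ → t ∈ time τ → s ≤ t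

/-- A teacher: a computable, prefix-monotone map on finite strings whose
output consists of elements of its input. -/
structure Teacher where
  t : List ℕ → List ℕ
  computable : Computable t
  mono : ∀ ⦃σ τ⦄, σ <+: τ → t σ <+: t τ
  content_sub : ∀ ⦃σ x⦄, x ∈ t σ → x ∈ σ

/-- A learning machine with access to a membership oracle, modeled
interactively: `step (σ, ans)` is the machine's action on input string `σ`
after having received the list `ans` of oracle answers so far; an even value
`2 * q` asks the oracle whether `q` belongs to the target, while an odd value
`2 * h + 1` halts the interaction with hypothesis `h`.  The run-time dominates
the length of the input read, the number of oracle queries asked, and the size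
of the value produced, and is monotone (cumulative). -/
structure OMachine where
  step : List ℕ × List Bool →. ℕ
  partrec : Partrec step
  time : List ℕ × List Bool →. ℕ
  time_dom : ∀ x, (time x).Dom ↔ (step x).Dom
  length_le_time : ∀ ⦃x t⦄, t ∈ time x → x.1.length ≤ t
  queries_le_time : ∀ ⦃x t⦄, t ∈ time x → x.2.length ≤ t
  size_le_time : ∀ ⦃x t v⦄, t ∈ time x → v ∈ step x → Nat.size v ≤ t
  time_mono : ∀ ⦃σ τ a b s t⦄, σ <+: τ → a <+: b →
    s ∈ time (σ, a) → t ∈ time (τ, b) → s ≤ t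

namespace OMachine

/-- The answer lists reachable in the interaction of the machine `M` with the
membership oracle for `A` on the input string `σ`. -/
inductive Reach (M : OMachine) (A : Set ℕ) (σ : List ℕ) : List Bool → Prop
  | nil : Reach M A σ []
  | query {ans q} : Reach M A σ ans → (2 * q) ∈ M.step (σ, ans) →
      Reach M A σ (ans ++ [decide (q ∈ A)])

/-- `M.Out A σ h ans`: on input `σ`, interacting with the membership oracle
for `A`, the machine `M` receives the oracle answers `ans` and halts with
hypothesis `h`. -/
def Out (M : OMachine) (A : Set ℕ) (σ : List ℕ) (h : ℕ) (ans : List Bool) : Prop :=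
  M.Reach A σ ans ∧ (2 * h + 1) ∈ M.step (σ, ans)

/-- With oracle `A`, on the stage inputs `I`, the machine `M` outputs the
hypothesis `h` from stage `n` onwards. -/
def Settles (M : OMachine) (A : Set ℕ) (I : ℕ → List ℕ) (h n : ℕ) : Prop :=
  ∀ m, n ≤ m → ∃ ans, M.Out A (I m) h ans

end OMachine

/-- A teacher for the teacher-and-oracle model: it additionally has access to
the oracle answers received so far by the learner. -/
structure OTeacher where
  t : List ℕ → List Bool → List ℕ
  computable : Computable₂ t
  mono : ∀ ⦃σ τ a b⦄, σ <+: τ → a <+: b → t σ a <+: t τ b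
  content_sub : ∀ ⦃σ a x⦄, x ∈ t σ a → x ∈ σ

/-- On the stage inputs `I`, the machine `M` outputs the hypothesis `h` from
stage `n` onwards. -/
def Machine.Settles (M : Machine) (I : ℕ → List ℕ) (h n : ℕ) : Prop :=
  ∀ m, n ≤ m → M.eval (I m) = Part.some h

/-- Settling for the teacher-and-oracle model: `hist m` records the oracle
answers the learner received at stage `m - 1`, which the teacher sees at
stage `m`.  From stage `n` on, the learner outputs `h`. -/
def OMachine.TOSettles (M : OMachine) (T : OTeacher) (A : Set ℕ) (f : ℕ → ℕ)
    (hist : ℕ → List Bool) (h n : ℕ) : Prop :=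
  ∀ m, n ≤ m → M.Out A (T.t (str f m) (hist m)) h (hist (m + 1))

/-! ### Polynomial run-time (PRT) -/

/-- `M` converges to the hypothesis `h` on the stage inputs `I` within fewer
than `B` computation steps. -/
def Machine.PRTIdentifies (M : Machine) (I : ℕ → List ℕ) (h B : ℕ) : Prop :=
  ∃ n, M.Settles I h n ∧ ∃ t, t ∈ M.time (I n) ∧ t < B

/-- Oracle version of `Machine.PRTIdentifies`; the run-time bound also bounds
the oracle use (by `queries_le_time`). -/
def OMachine.PRTIdentifies (M : OMachine) (A : Set ℕ) (I : ℕ → List ℕ) (h B : ℕ) : Prop :=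
  ∃ n, M.Settles A I h n ∧
    ∃ ans t, M.Out A (I n) h ans ∧ t ∈ M.time (I n, ans) ∧ t < B

/-- `M` PRT-learns `𝓕` with polynomial bound `p`. -/
def PRTLearnsWith (M : Machine) (p : Polynomial ℕ) (𝓕 : IndexedFamily) : Prop :=
  ∀ A, 𝓕.Mem A → ∀ f, IsEnum f A →
    ∃ h, 𝓕.F h = A ∧ M.PRTIdentifies (str f) h (p.eval (𝓕.mi A))

/-- `𝓕` is PRT-learnable. -/
def PRT (𝓕 : IndexedFamily) : Prop := ∃ M p, PRTLearnsWith M p 𝓕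

/-- The learner-teacher pair `(M, T)` PRT-learns `𝓕` with polynomial bound `p`. -/
def PRTTLearnsWith (M : Machine) (T : Teacher) (p : Polynomial ℕ) (𝓕 : IndexedFamily) : Prop :=
  ∀ A, 𝓕.Mem A → ∀ f, IsEnum f A →
    ∃ h, 𝓕.F h = A ∧ M.PRTIdentifies (fun m => T.t (str f m)) h (p.eval (𝓕.mi A))

/-- `𝓕` is PRT[T]-learnable. -/
def PRTT (𝓕 : IndexedFamily) : Prop := ∃ M T p, PRTTLearnsWith M T p 𝓕

/-- `𝓕` is PRT[O]-learnable. -/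
def PRTO (𝓕 : IndexedFamily) : Prop :=
  ∃ (M : OMachine) (p : Polynomial ℕ), ∀ A, 𝓕.Mem A → ∀ f, IsEnum f A →
    ∃ h, 𝓕.F h = A ∧ M.PRTIdentifies A (str f) h (p.eval (𝓕.mi A))

/-- `𝓕` is PRT[T,O]-learnable. -/
def PRTTO (𝓕 : IndexedFamily) : Prop :=
  ∃ (M : OMachine) (T : OTeacher) (p : Polynomial ℕ),
    ∀ A, 𝓕.Mem A → ∀ f, IsEnum f A →
      ∃ h, 𝓕.F h = A ∧ ∃ hist : ℕ → List Bool, hist 0 = [] ∧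
        ∃ n, M.TOSettles T A f hist h n ∧
          ∃ t, t ∈ M.time (T.t (str f n) (hist n), hist (n + 1)) ∧ t < p.eval (𝓕.mi A)

/-! ### Polynomial size dataset (PSD) -/

/-- `M` converges to `h` on an initial stage whose input contains fewer than
`B` distinct elements. -/
def Machine.PSDIdentifies (M : Machine) (I : ℕ → List ℕ) (h B : ℕ) : Prop :=
  ∃ n, M.Settles I h n ∧ (I n).toFinset.card < B

/-- Oracle version of `Machine.PSDIdentifies`; the oracle use is also bounded. -/
def OMachine.PSDIdentifies (M : OMachine) (A : Set ℕ) (I : ℕ → List ℕ) (h B : ℕ) : Prop :=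
  ∃ n, M.Settles A I h n ∧ (I n).toFinset.card < B ∧
    ∃ ans, M.Out A (I n) h ans ∧ ans.length ≤ B

/-- `𝓕` is PSD-learnable. -/
def PSD (𝓕 : IndexedFamily) : Prop :=
  ∃ (M : Machine) (p : Polynomial ℕ), ∀ A, 𝓕.Mem A → ∀ f, IsEnum f A →
    ∃ h, 𝓕.F h = A ∧ M.PSDIdentifies (str f) h (p.eval (𝓕.mi A))

/-- `𝓕` is PSD[T]-learnable. -/
def PSDT (𝓕 : IndexedFamily) : Prop :=
  ∃ (M : Machine) (T : Teacher) (p : Polynomial ℕ), ∀ A, 𝓕.Mem A → ∀ f, IsEnum f A →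
    ∃ h, 𝓕.F h = A ∧ M.PSDIdentifies (fun m => T.t (str f m)) h (p.eval (𝓕.mi A))

/-- `𝓕` is PSD[O]-learnable. -/
def PSDO (𝓕 : IndexedFamily) : Prop :=
  ∃ (M : OMachine) (p : Polynomial ℕ), ∀ A, 𝓕.Mem A → ∀ f, IsEnum f A →
    ∃ h, 𝓕.F h = A ∧ M.PSDIdentifies A (str f) h (p.eval (𝓕.mi A))

/-- `𝓕` is PSD[T,O]-learnable. -/
def PSDTO (𝓕 : IndexedFamily) : Prop :=
  ∃ (M : OMachine) (T : OTeacher) (p : Polynomial ℕ),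
    ∀ A, 𝓕.Mem A → ∀ f, IsEnum f A →
      ∃ h, 𝓕.F h = A ∧ ∃ hist : ℕ → List Bool, hist 0 = [] ∧
        ∃ n, M.TOSettles T A f hist h n ∧
          (T.t (str f n) (hist n)).toFinset.card < p.eval (𝓕.mi A) ∧
          (hist (n + 1)).length ≤ p.eval (𝓕.mi A)

/-! ### Polynomial mind-changes (PMC) -/

/-- The set of positions at which the hypothesis stream `g` changes its mind. -/
def MindChanges (g : ℕ → ℕ) : Set ℕ := {i | g i ≠ g (i + 1)}

/-- The hypothesis stream `g` changes its mind at most `B` times, and the only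
hypothesis appearing infinitely often in it is an index of `A` in `𝓕`. -/
def PMCCriterion (𝓕 : IndexedFamily) (A : Set ℕ) (g : ℕ → ℕ) (B : ℕ) : Prop :=
  (MindChanges g).Finite ∧ (MindChanges g).ncard ≤ B ∧
    ∀ h, {i | g i = h}.Infinite → 𝓕.F h = A

/-- `𝓕` is PMC-learnable. -/
def PMC (𝓕 : IndexedFamily) : Prop :=
  ∃ (M : Machine) (p : Polynomial ℕ), ∀ A, 𝓕.Mem A → ∀ f, IsEnum f A →
    ∃ g : ℕ → ℕ, (∀ m, M.eval (str f m) = Part.some (g m)) ∧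
      PMCCriterion 𝓕 A g (p.eval (𝓕.mi A))

/-- `𝓕` is PMC[T]-learnable. -/
def PMCT (𝓕 : IndexedFamily) : Prop :=
  ∃ (M : Machine) (T : Teacher) (p : Polynomial ℕ), ∀ A, 𝓕.Mem A → ∀ f, IsEnum f A →
    ∃ g : ℕ → ℕ, (∀ m, M.eval (T.t (str f m)) = Part.some (g m)) ∧
      PMCCriterion 𝓕 A g (p.eval (𝓕.mi A))

/-- `𝓕` is PMC[O]-learnable. -/
def PMCO (𝓕 : IndexedFamily) : Prop :=
  ∃ (M : OMachine) (p : Polynomial ℕ), ∀ A, 𝓕.Mem A → ∀ f, IsEnum f A →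
    ∃ g : ℕ → ℕ,
      (∀ m, ∃ ans, M.Out A (str f m) (g m) ans ∧ ans.length ≤ p.eval (𝓕.mi A)) ∧
      PMCCriterion 𝓕 A g (p.eval (𝓕.mi A))

/-- `𝓕` is PMC[T,O]-learnable. -/
def PMCTO (𝓕 : IndexedFamily) : Prop :=
  ∃ (M : OMachine) (T : OTeacher) (p : Polynomial ℕ),
    ∀ A, 𝓕.Mem A → ∀ f, IsEnum f A →
      ∃ hist : ℕ → List Bool, hist 0 = [] ∧
        ∃ g : ℕ → ℕ,
          (∀ m, M.Out A (T.t (str f m) (hist m)) (g m) (hist (m + 1)) ∧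
            (hist (m + 1)).length ≤ p.eval (𝓕.mi A)) ∧
          PMCCriterion 𝓕 A g (p.eval (𝓕.mi A))

/-! ### Polynomial size characteristic sample (PCS) -/

/-- `𝓕` is PCS-learnable: there are a machine, a polynomial bound and an
assignment of a characteristic sample to each member of `𝓕`. -/
def PCS (𝓕 : IndexedFamily) : Prop :=
  ∃ (M : Machine) (p : Polynomial ℕ) (S : Set ℕ → Finset ℕ),
    ∀ A, 𝓕.Mem A → ↑(S A) ⊆ A ∧ (S A).card < p.eval (𝓕.mi A) ∧
      ∃ e, 𝓕.F e = A ∧ ∀ f, IsEnum f A → ∀ n, (∀ x ∈ S A, x ∈ str f n) →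
        M.eval (str f n) = Part.some e

/-- `𝓕` is PCS[O]-learnable. -/
def PCSO (𝓕 : IndexedFamily) : Prop :=
  ∃ (M : OMachine) (p : Polynomial ℕ) (S : Set ℕ → Finset ℕ),
    ∀ A, 𝓕.Mem A → ↑(S A) ⊆ A ∧ (S A).card < p.eval (𝓕.mi A) ∧
      ∃ e, 𝓕.F e = A ∧ ∀ f, IsEnum f A → ∀ n, (∀ x ∈ S A, x ∈ str f n) →
        ∃ ans, M.Out A (str f n) e ans ∧ ans.length ≤ p.eval (𝓕.mi A)

/-- `𝓕` is PCS[T]-learnable: the characteristic sample must eventually appear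
in the teacher's output stream, after which the learner locks onto a correct
index. -/
def PCST (𝓕 : IndexedFamily) : Prop :=
  ∃ (M : Machine) (T : Teacher) (p : Polynomial ℕ) (S : Set ℕ → Finset ℕ),
    ∀ A, 𝓕.Mem A → ↑(S A) ⊆ A ∧ (S A).card < p.eval (𝓕.mi A) ∧
      ∃ e, 𝓕.F e = A ∧ ∀ f, IsEnum f A →
        (∃ n, ∀ x ∈ S A, x ∈ T.t (str f n)) ∧
        ∀ n, (∀ x ∈ S A, x ∈ T.t (str f n)) → M.eval (T.t (str f n)) = Part.some e

/-- `𝓕` is PCS[T,O]-learnable. -/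
def PCSTO (𝓕 : IndexedFamily) : Prop :=
  ∃ (M : OMachine) (T : OTeacher) (p : Polynomial ℕ) (S : Set ℕ → Finset ℕ),
    ∀ A, 𝓕.Mem A → ↑(S A) ⊆ A ∧ (S A).card < p.eval (𝓕.mi A) ∧
      ∃ e, 𝓕.F e = A ∧ ∀ f, IsEnum f A →
        ∃ hist : ℕ → List Bool, hist 0 = [] ∧
          (∃ n, ∀ x ∈ S A, x ∈ T.t (str f n) (hist n)) ∧
          ∀ n, (∀ x ∈ S A, x ∈ T.t (str f n) (hist n)) →
            M.Out A (T.t (str f n) (hist n)) e (hist (n + 1)) ∧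
            (hist (n + 1)).length ≤ p.eval (𝓕.mi A)


/-- The polynomial coded by `i` (as its list of coefficients under the fixed
coding of lists by naturals), evaluated at `x`; this is `p_i(x)`. -/
def pEval (i x : ℕ) : ℕ :=
  (Denumerable.ofNat (List ℕ) i).foldr (fun c v => c + x * v) 0

/-- Auxiliary: the list `[a_0, …, a_{n-1}]` where
`a_n = n + 1 + Σ_{i<n} p_i(a_i)`. -/
def aCSDaux : ℕ → List ℕ
  | 0 => []
  | n + 1 =>
    let l := aCSDaux n
    l ++ [n + 1 + (l.zipIdx.map fun q => pEval q.2 q.1).sum]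

/-- `a_n = n + 1 + Σ_{i<n} p_i(a_i)`. -/
def aCSD (n : ℕ) : ℕ := (aCSDaux (n + 1)).getD n 0

/-- `A ⊗ B = {⟨a, b⟩ : a ∈ A, b ∈ B}` under the fixed pairing. -/
def otimes (A B : Set ℕ) : Set ℕ := {m | ∃ a ∈ A, ∃ b ∈ B, m = Nat.pair a b}

/-- `A_n = [0,a_n] ⊗ {p_n(a_n)} ∪ ⋃_{i < p_n(a_n)} [0, a_n + i] ⊗ {i}`. -/
def Aset (n : ℕ) : Set ℕ :=
  otimes (Set.Icc 0 (aCSD n)) {pEval n (aCSD n)} ∪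
    ⋃ i ∈ Set.Iio (pEval n (aCSD n)), otimes (Set.Icc 0 (aCSD n + i)) {i}

/-- `B_{n,i} = ⋃_{j ≤ i} [0, a_n + j] ⊗ {j}`. -/
def Bset (n i : ℕ) : Set ℕ := ⋃ j ∈ Set.Iic i, otimes (Set.Icc 0 (aCSD n + j)) {j}

/-!
Column `0` of every member of `𝓒𝓢𝓓` has height `a_n`, so a learner with a membership oracle finds
`a_n`, and with it `n` and `P = p_n(a_n)`, by querying `⟨1,0⟩, ⟨2,0⟩, …`. The point `⟨0,P⟩` lies in
`A_n` but in no `B_{n,j}`, and in the latter case querying `⟨0,1⟩, ⟨0,2⟩, …` finds `j`. This takes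
`O(a_n + j)` queries of size `O(a_n²)` (codes of polynomials are small), which is polynomial in the
minimal index of the target; the text itself is never read.

Against a learner–teacher pair with time bound `p`, take `n` with `p_n = p + 2`. If, on the teacher's
output for a text of some `K ⊂ L`, the learner already conjectures `K`, then that output is shorter
than `p(mi L)`: continue the text into one for `L`; the learner converges on it within `p(mi L)`
steps, and not before the current stage, where it still conjectures `K`. So the teacher's outputs
on a text for `K` stabilise, and continuing that text into texts for the larger members of a chain
`K₀ ⊂ K₁ ⊂ … ⊂ K_m ⊂ L` yields stable outputs that are strictly growing prefixes of one another
(the learner's conjectures differ), whence `m < p(mi L)`. The chain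
`B_{n,1} ⊂ … ⊂ B_{n,p(a_n)+1} ⊂ A_n` violates this.
-/

/-! ### Codes of polynomials and the sequence `a_n` -/

lemma le_encode_of_mem {l : List ℕ} {a : ℕ} (h : a ∈ l) : a ≤ Encodable.encode l := by
  induction l with
  | nil => simp at h
  | cons b l ih =>
    rw [Encodable.encode_list_cons]
    rcases List.mem_cons.1 h with rfl | h
    · exact (Nat.left_le_pair _ _).trans (Nat.le_succ _)
    · exact (ih h).trans ((Nat.right_le_pair _ _).trans (Nat.le_succ _))

lemma foldr_horner_eq_sum (l : List ℕ) (x : ℕ) :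
    l.foldr (fun c v => c + x * v) 0 = ∑ k ∈ Finset.range l.length, l.getD k 0 * x ^ k := by
  induction l with
  | nil => simp
  | cons c l ih =>
    rw [List.foldr_cons, ih, List.length_cons, Finset.sum_range_succ', Finset.mul_sum]
    simp only [List.getD_cons_succ, List.getD_cons_zero, pow_succ, pow_zero, mul_one]
    rw [add_comm]
    exact congrArg (· + c) (Finset.sum_congr rfl fun k _ => by ring)

lemma foldr_horner_lt {l : List ℕ} {C : ℕ} (hC : ∀ c ∈ l, c ≤ C) (x : ℕ) :
    l.foldr (fun c v => c + x * v) 0 < (C + 1) * (x + 1) ^ l.length := by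
  induction l with
  | nil => simp
  | cons c l ih =>
    have hv := ih fun c hc => hC c (List.mem_cons_of_mem _ hc)
    have hc : c < (C + 1) * (x + 1) ^ l.length :=
      (Nat.lt_succ_of_le (hC c List.mem_cons_self)).trans_le
        (Nat.le_mul_of_pos_right _ (by positivity))
    calc c + x * l.foldr (fun c v => c + x * v) 0
        < (C + 1) * (x + 1) ^ l.length + x * ((C + 1) * (x + 1) ^ l.length) :=
          Nat.add_lt_add_of_lt_of_le hc (Nat.mul_le_mul_left _ hv.le)
      _ = (C + 1) * (x + 1) ^ (c :: l).length := by rw [List.length_cons, pow_succ]; ring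

lemma exists_pEval_eq (p : Polynomial ℕ) : ∃ n, ∀ x, pEval n x = p.eval x := by
  refine ⟨Encodable.encode ((List.range (p.natDegree + 1)).map p.coeff), fun x => ?_⟩
  rw [pEval, Denumerable.ofNat_encode, foldr_horner_eq_sum, Polynomial.eval_eq_sum_range,
    List.length_map, List.length_range]
  refine Finset.sum_congr rfl fun k hk => ?_
  rw [List.getD_eq_getElem?_getD, List.getElem?_map, List.getElem?_range (Finset.mem_range.1 hk)]
  rfl

lemma pEval_lt_two_pow {i x : ℕ} (hix : i ≤ x) : pEval i x < 2 ^ (x * x + x) := by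
  set l := Denumerable.ofNat (List ℕ) i
  have hcode : Encodable.encode l = i := Denumerable.encode_ofNat i
  have hx : x + 1 ≤ 2 ^ x := Nat.lt_two_pow_self
  calc pEval i x < (x + 1) * (x + 1) ^ l.length :=
        foldr_horner_lt (fun c hc => (hcode ▸ le_encode_of_mem hc).trans hix) x
    _ ≤ 2 ^ x * (2 ^ x) ^ x := by
        gcongr
        · omega
        · exact (hcode ▸ Encodable.length_le_encode l).trans hix
    _ = 2 ^ (x * x + x) := by rw [← pow_mul, ← pow_add, add_comm]

lemma length_aCSDaux (n : ℕ) : (aCSDaux n).length = n := by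
  induction n with
  | zero => rfl
  | succ n ih => simp [aCSDaux, ih]

lemma aCSDaux_succ (n : ℕ) : aCSDaux (n + 1) = aCSDaux n ++ [aCSD n] := by
  simp [aCSD, aCSDaux, length_aCSDaux]

lemma aCSD_eq (n : ℕ) :
    aCSD n = n + 1 + ((aCSDaux n).zipIdx.map fun q => pEval q.2 q.1).sum := by
  simp [aCSD, aCSDaux, length_aCSDaux]

lemma aCSD_zero : aCSD 0 = 1 := rfl

lemma aCSD_succ (n : ℕ) : aCSD (n + 1) = aCSD n + 1 + pEval n (aCSD n) := by
  have h := aCSD_eq n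
  rw [aCSD_eq (n + 1), aCSDaux_succ, List.zipIdx_append, List.map_append, List.sum_append,
    length_aCSDaux]
  simp only [List.zipIdx_cons, List.zipIdx_nil, List.map_cons, List.map_nil, List.sum_cons,
    List.sum_nil, zero_add, add_zero]
  omega

lemma succ_le_aCSD (n : ℕ) : n + 1 ≤ aCSD n := by
  induction n with
  | zero => rfl
  | succ n ih => rw [aCSD_succ]; omega

lemma aCSD_strictMono : StrictMono aCSD :=
  strictMono_nat_of_lt_succ fun n => by rw [aCSD_succ]; omega

lemma _root_.Polynomial.monotone_eval_nat (p : Polynomial ℕ) : Monotone fun x : ℕ => p.eval x := by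
  intro x y h
  simp only [Polynomial.eval_eq_sum_range]
  gcongr

/-! ### The family `𝓒𝓢𝓓` -/

lemma mem_otimes {A B : Set ℕ} {x : ℕ} : x ∈ otimes A B ↔ x.unpair.1 ∈ A ∧ x.unpair.2 ∈ B := by
  constructor
  · rintro ⟨a, ha, b, hb, rfl⟩
    simpa using ⟨ha, hb⟩
  · rintro ⟨ha, hb⟩
    exact ⟨_, ha, _, hb, (Nat.pair_unpair x).symm⟩

lemma mem_Aset {n x : ℕ} :
    x ∈ Aset n ↔ (x.unpair.2 = pEval n (aCSD n) ∧ x.unpair.1 ≤ aCSD n) ∨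
      (x.unpair.2 < pEval n (aCSD n) ∧ x.unpair.1 ≤ aCSD n + x.unpair.2) := by
  simp only [Aset, Set.mem_union, Set.mem_iUnion, mem_otimes, Set.mem_Icc, Set.mem_singleton_iff,
    Set.mem_Iio, exists_prop, zero_le, true_and]
  constructor
  · rintro (⟨h1, h2⟩ | ⟨i, hi, h1, rfl⟩)
    · exact .inl ⟨h2, h1⟩
    · exact .inr ⟨hi, h1⟩
  · rintro (⟨h2, h1⟩ | ⟨hi, h1⟩)
    · exact .inl ⟨h1, h2⟩
    · exact .inr ⟨_, hi, h1, rfl⟩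

lemma mem_Bset {n i x : ℕ} :
    x ∈ Bset n i ↔ x.unpair.2 ≤ i ∧ x.unpair.1 ≤ aCSD n + x.unpair.2 := by
  simp only [Bset, Set.mem_iUnion, mem_otimes, Set.mem_Icc, Set.mem_singleton_iff, Set.mem_Iic,
    exists_prop, zero_le, true_and]
  constructor
  · rintro ⟨j, hj, h1, rfl⟩
    exact ⟨hj, h1⟩
  · rintro ⟨hj, h1⟩
    exact ⟨_, hj, h1, rfl⟩

@[simp]
lemma pair_mem_Aset {n u v : ℕ} :
    Nat.pair u v ∈ Aset n ↔ (v = pEval n (aCSD n) ∧ u ≤ aCSD n) ∨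
      (v < pEval n (aCSD n) ∧ u ≤ aCSD n + v) := by
  rw [mem_Aset, Nat.unpair_pair]

@[simp]
lemma pair_mem_Bset {n i u v : ℕ} : Nat.pair u v ∈ Bset n i ↔ v ≤ i ∧ u ≤ aCSD n + v := by
  rw [mem_Bset, Nat.unpair_pair]

lemma pair_zero_mem_Aset {n k : ℕ} : Nat.pair k 0 ∈ Aset n ↔ k ≤ aCSD n := by
  rw [pair_mem_Aset]
  omega

lemma pair_zero_mem_Bset {n i k : ℕ} : Nat.pair k 0 ∈ Bset n i ↔ k ≤ aCSD n := by
  rw [pair_mem_Bset]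
  omega

lemma Bset_ssubset_Aset {n i : ℕ} (hi : i < pEval n (aCSD n)) : Bset n i ⊂ Aset n := by
  refine (Set.ssubset_iff_of_subset fun x hx => ?_).2 ⟨Nat.pair 0 (pEval n (aCSD n)), ?_, ?_⟩
  · rw [mem_Bset] at hx
    rw [mem_Aset]
    omega
  · simp
  · simp only [pair_mem_Bset]
    omega

lemma Bset_ssubset_Bset_succ (n i : ℕ) : Bset n i ⊂ Bset n (i + 1) := by
  refine (Set.ssubset_iff_of_subset fun x hx => ?_).2 ⟨Nat.pair 0 (i + 1), ?_, ?_⟩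
  · rw [mem_Bset] at hx ⊢
    omega
  · simp
  · simp

def csdLevel (k : ℕ) : ℕ := Nat.findGreatest (fun m => aCSD m ≤ k) k

lemma csdLevel_le (k : ℕ) : csdLevel k ≤ k := Nat.findGreatest_le k

lemma csdLevel_eq {n k : ℕ} (h₁ : aCSD n ≤ k) (h₂ : k < aCSD (n + 1)) : csdLevel k = n := by
  have := succ_le_aCSD n
  refine Nat.findGreatest_eq_iff.2 ⟨by omega, fun _ => h₁, fun m hnm _ hm => ?_⟩
  exact absurd ((aCSD_strictMono.monotone (show n + 1 ≤ m from hnm)).trans hm) (by omega)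

lemma csdLevel_aCSD (n : ℕ) : csdLevel (aCSD n) = n :=
  csdLevel_eq le_rfl (aCSD_strictMono n.lt_succ_self)

lemma aCSD_csdLevel_le (k : ℕ) : aCSD (csdLevel k) ≤ k + 1 := by
  by_cases h : csdLevel k = 0
  · rw [h, aCSD_zero]
    omega
  · exact (Nat.findGreatest_of_ne_zero rfl h).trans (Nat.le_succ k)

lemma lt_aCSD_csdLevel_succ (k : ℕ) : k < aCSD (csdLevel k + 1) := by
  by_cases h : csdLevel k + 1 ≤ k
  · exact not_le.1 (Nat.findGreatest_is_greatest (P := fun m => aCSD m ≤ k)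
      (Nat.lt_succ_self (csdLevel k)) h)
  · have := succ_le_aCSD (csdLevel k + 1)
    omega

/-- The indices `a_n + j`, `j ≤ p_n(a_n)`, fill `[a_n, a_{n+1})`. Those left free by the paper,
`a_n + p_n(a_n)` and `0 < a_0`, carry `A_n` and `A_0` (the latter by truncated subtraction). -/
def csdSet (k : ℕ) : Set ℕ :=
  let n := csdLevel k
  let j := k - aCSD n
  if j = 0 ∨ j = pEval n (aCSD n) then Aset n else Bset n j

lemma csdSet_aCSD (n : ℕ) : csdSet (aCSD n) = Aset n := by
  rw [csdSet, csdLevel_aCSD, Nat.sub_self, if_pos (.inl rfl)]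

lemma csdSet_aCSD_add {n j : ℕ} (h₀ : 0 < j) (hP : j < pEval n (aCSD n)) :
    csdSet (aCSD n + j) = Bset n j := by
  have hlevel : csdLevel (aCSD n + j) = n :=
    csdLevel_eq (Nat.le_add_right _ _) (by rw [aCSD_succ]; omega)
  rw [csdSet, hlevel, Nat.add_sub_cancel_left, if_neg (by omega)]

lemma csdSet_cases (k : ℕ) :
    (∃ n, aCSD n ≤ k + 1 ∧ csdSet k = Aset n) ∨
      ∃ n j, 0 < j ∧ j < pEval n (aCSD n) ∧ k = aCSD n + j := by
  set n := csdLevel k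
  have hk : k < aCSD n + 1 + pEval n (aCSD n) := aCSD_succ n ▸ lt_aCSD_csdLevel_succ k
  by_cases h : k - aCSD n = 0 ∨ k - aCSD n = pEval n (aCSD n)
  · exact .inl ⟨n, aCSD_csdLevel_le k, if_pos h⟩
  · exact .inr ⟨n, k - aCSD n, by omega, by omega, by omega⟩

lemma zero_mem_csdSet (k : ℕ) : 0 ∈ csdSet k := by
  show Nat.pair 0 0 ∈ csdSet k
  dsimp only [csdSet]
  split_ifs <;> simp only [pair_zero_mem_Aset, pair_zero_mem_Bset, zero_le]

lemma primrec₂_pEval : Primrec₂ pEval :=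
  Primrec.list_foldr ((Primrec.ofNat (List ℕ)).comp Primrec.fst) (Primrec.const 0)
    (Primrec.nat_add.comp (Primrec.fst.comp Primrec.snd)
      (Primrec.nat_mul.comp (Primrec.snd.comp Primrec.fst) (Primrec.snd.comp Primrec.snd))).to₂

lemma primrec_aCSD : Primrec aCSD := by
  refine (Primrec.nat_rec₁ 1 (Primrec.nat_add.comp (Primrec.succ.comp Primrec.snd)
    (primrec₂_pEval.comp Primrec.fst Primrec.snd)).to₂).of_eq fun n => ?_
  induction n with
  | zero => rfl
  | succ n ih => rw [aCSD_succ, ← ih]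

lemma primrec_csdLevel : Primrec csdLevel :=
  Primrec.nat_findGreatest Primrec.id (Primrec.nat_le.comp (primrec_aCSD.comp Primrec.snd)
    Primrec.fst)

lemma primrecRel_mem_Aset : PrimrecRel fun x n => x ∈ Aset n := by
  have hu : Primrec fun q : ℕ × ℕ => q.1.unpair.1 := Primrec.fst.comp (Primrec.unpair.comp .fst)
  have hv : Primrec fun q : ℕ × ℕ => q.1.unpair.2 := Primrec.snd.comp (Primrec.unpair.comp .fst)
  have ha : Primrec fun q : ℕ × ℕ => aCSD q.2 := primrec_aCSD.comp .snd
  have hP : Primrec fun q : ℕ × ℕ => pEval q.2 (aCSD q.2) := primrec₂_pEval.comp .snd ha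
  exact (((Primrec.eq.comp hv hP).and (Primrec.nat_le.comp hu ha)).or
    ((Primrec.nat_lt.comp hv hP).and (Primrec.nat_le.comp hu (Primrec.nat_add.comp ha hv)))).of_eq
    fun _ => mem_Aset.symm

lemma primrecRel_mem_Bset : PrimrecRel fun (x : ℕ) (q : ℕ × ℕ) => x ∈ Bset q.1 q.2 := by
  have hu : Primrec fun q : ℕ × ℕ × ℕ => q.1.unpair.1 :=
    Primrec.fst.comp (Primrec.unpair.comp .fst)
  have hv : Primrec fun q : ℕ × ℕ × ℕ => q.1.unpair.2 :=
    Primrec.snd.comp (Primrec.unpair.comp .fst)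
  have ha : Primrec fun q : ℕ × ℕ × ℕ => aCSD q.2.1 := primrec_aCSD.comp (Primrec.fst.comp .snd)
  exact ((Primrec.nat_le.comp hv (Primrec.snd.comp .snd)).and
    (Primrec.nat_le.comp hu (Primrec.nat_add.comp ha hv))).of_eq fun _ => mem_Bset.symm

lemma primrecRel_mem_csdSet : PrimrecRel fun x k => x ∈ csdSet k := by
  have hn : Primrec fun q : ℕ × ℕ => csdLevel q.2 := primrec_csdLevel.comp .snd
  have hj : Primrec fun q : ℕ × ℕ => q.2 - aCSD (csdLevel q.2) :=
    Primrec.nat_sub.comp .snd (primrec_aCSD.comp hn)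
  have hc : PrimrecPred fun q : ℕ × ℕ =>
      q.2 - aCSD (csdLevel q.2) = 0 ∨
        q.2 - aCSD (csdLevel q.2) = pEval (csdLevel q.2) (aCSD (csdLevel q.2)) :=
    (Primrec.eq.comp hj (Primrec.const 0)).or
      (Primrec.eq.comp hj (primrec₂_pEval.comp hn (primrec_aCSD.comp hn)))
  refine ((hc.and (primrecRel_mem_Aset.comp .fst hn)).or
    (hc.not.and (primrecRel_mem_Bset.comp .fst (hn.pair hj)))).of_eq fun q => ?_
  dsimp only [csdSet]
  split_ifs with h <;> simp [h]

def csdFamily : IndexedFamily where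
  F := csdSet
  nonempty k := ⟨0, zero_mem_csdSet k⟩
  uce := primrecRel_mem_csdSet.computablePred.to_re

/-! ### The oracle learner -/

/-- The learner's action after the oracle answers `ans` (see `OMachine`: `2 * q` queries `q`,
`2 * h + 1` halts with `h`). It queries `⟨1,0⟩, ⟨2,0⟩, …` until the first negative answer, which
comes after `a = a_n` positive ones; then `⟨0,P⟩` for `P = p_n(a_n)`, a positive answer meaning
`A_n`; otherwise it climbs `⟨0,1⟩, ⟨0,2⟩, …` until a negative answer (or `P - 1`) reveals `j`. -/
def csdStep (ans : List Bool) : ℕ :=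
  let a := ans.idxOf false
  if a = ans.length then 2 * Nat.pair (a + 1) 0 else
  match ans.drop (a + 1) with
  | [] => 2 * Nat.pair 0 (pEval (csdLevel a) a)
  | true :: _ => 2 * a + 1
  | false :: rest =>
    let s := rest.idxOf false
    if s = rest.length ∧ s + 1 < pEval (csdLevel a) a then 2 * Nat.pair 0 (s + 1)
    else 2 * (a + s) + 1

lemma primrec_csdStep : Primrec csdStep := by
  have ha : Primrec fun ans : List Bool => ans.idxOf false :=
    Primrec.list_idxOf.comp (Primrec.const false) .id
  have hP : Primrec fun ans : List Bool => pEval (csdLevel (ans.idxOf false)) (ans.idxOf false) :=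
    primrec₂_pEval.comp (primrec_csdLevel.comp ha) ha
  have ha' : Primrec fun q : List Bool × Bool × List Bool => q.1.idxOf false := ha.comp .fst
  have hs : Primrec fun q : List Bool × Bool × List Bool => q.2.2.idxOf false :=
    Primrec.list_idxOf.comp (Primrec.const false) (Primrec.snd.comp .snd)
  have hclimb : Primrec₂ fun (ans : List Bool) (q : Bool × List Bool) =>
      bif q.1 then 2 * ans.idxOf false + 1 else
        if q.2.idxOf false = q.2.length ∧
            q.2.idxOf false + 1 < pEval (csdLevel (ans.idxOf false)) (ans.idxOf false)
          then 2 * Nat.pair 0 (q.2.idxOf false + 1)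
        else 2 * (ans.idxOf false + q.2.idxOf false) + 1 :=
    Primrec.cond (Primrec.fst.comp .snd) (Primrec.succ.comp (Primrec.nat_double.comp ha'))
      (Primrec.ite ((Primrec.eq.comp hs (Primrec.list_length.comp (Primrec.snd.comp .snd))).and
          (Primrec.nat_lt.comp (Primrec.succ.comp hs) (hP.comp .fst)))
        (Primrec.nat_double.comp (Primrec₂.natPair.comp (.const 0) (Primrec.succ.comp hs)))
        (Primrec.succ.comp (Primrec.nat_double.comp (Primrec.nat_add.comp ha' hs))))
  refine (Primrec.ite (Primrec.eq.comp ha .list_length)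
    (Primrec.nat_double.comp (Primrec₂.natPair.comp (Primrec.succ.comp ha) (.const 0)))
    (Primrec.list_casesOn (Primrec.list_drop.comp (Primrec.succ.comp ha) .id)
      (Primrec.nat_double.comp (Primrec₂.natPair.comp (.const 0) hP)) hclimb)).of_eq fun ans => ?_
  dsimp only [csdStep]
  split_ifs
  · rfl
  · dsimp only [id, Nat.succ_eq_add_one]
    rcases ans.drop (ans.idxOf false + 1) with _ | ⟨_ | _, _⟩ <;> rfl

lemma csdStep_lt_two_pow (ans : List Bool) : csdStep ans < 2 ^ (2 * (ans.length + 2) ^ 2) := by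
  suffices csdStep ans < 2 * (ans.length + 2) ^ 2 ∨
      csdStep ans < 2 ^ (2 * (ans.length + 2) ^ 2) from
    this.elim (·.trans Nat.lt_two_pow_self) id
  have hpair (u v : ℕ) : 2 * Nat.pair u v < 2 * (max u v + 1) ^ 2 := by
    have := Nat.pair_lt_max_add_one_sq u v
    omega
  have hsq {u : ℕ} (hu : u ≤ ans.length + 1) : 2 * (u + 1) ^ 2 ≤ 2 * (ans.length + 2) ^ 2 :=
    Nat.mul_le_mul_left 2 (Nat.pow_le_pow_left (by omega) 2)
  have hlin : 2 * ans.length + 4 ≤ (ans.length + 2) ^ 2 := by nlinarith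
  have ha : ans.idxOf false ≤ ans.length := List.idxOf_le_length
  dsimp only [csdStep]
  split_ifs with hL
  · exact .inl ((hpair _ _).trans_le (hsq (by omega)))
  rcases hd : ans.drop (ans.idxOf false + 1) with _ | ⟨_ | _, rest⟩ <;> dsimp only
  · right
    set a := ans.idxOf false
    have hP : pEval (csdLevel a) a + 1 ≤ 2 ^ (a * a + a) := pEval_lt_two_pow (csdLevel_le a)
    calc 2 * Nat.pair 0 (pEval (csdLevel a) a)
        < 2 * (pEval (csdLevel a) a + 1) ^ 2 := by simpa using hpair 0 (pEval (csdLevel a) a)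
      _ ≤ 2 * (2 ^ (a * a + a)) ^ 2 := by gcongr
      _ = 2 ^ (2 * (a * a + a) + 1) := by ring
      _ ≤ 2 ^ (2 * (ans.length + 2) ^ 2) := Nat.pow_le_pow_right (by omega) (by nlinarith)
  · have hrest : rest.length < ans.length := by
      have := congrArg List.length hd
      simp only [List.length_drop, List.length_cons] at this
      omega
    have hs : rest.idxOf false ≤ rest.length := List.idxOf_le_length
    split_ifs
    · exact .inl ((hpair _ _).trans_le (hsq (by omega)))
    · omega
  · omega

def csdLearner : OMachine where
  step x := Part.some (csdStep x.2)
  partrec := (primrec_csdStep.comp Primrec.snd).to_comp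
  time x := Part.some (x.1.length + 2 * (x.2.length + 2) ^ 2)
  time_dom _ := by simp
  length_le_time x t ht := by
    rw [Part.mem_some_iff.1 ht]
    omega
  queries_le_time x t ht := by
    rw [Part.mem_some_iff.1 ht]
    nlinarith
  size_le_time x t v ht hv := by
    rw [Part.mem_some_iff.1 ht, Part.mem_some_iff.1 hv]
    exact (Nat.size_le.2 (csdStep_lt_two_pow x.2)).trans (Nat.le_add_left _ _)
  time_mono σ τ a b s t hστ hab hs ht := by
    rw [Part.mem_some_iff.1 hs, Part.mem_some_iff.1 ht]
    have := hστ.length_le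
    have := Nat.pow_le_pow_left (Nat.add_le_add_right hab.length_le 2) 2
    dsimp only
    omega

lemma csdLearner_reach_append {S : Set ℕ} {σ : List ℕ} {ans : List Bool} {q : ℕ}
    (h : csdLearner.Reach S σ ans) (hq : csdStep ans = 2 * q) :
    csdLearner.Reach S σ (ans ++ [decide (q ∈ S)]) :=
  h.query (hq ▸ Part.mem_some _)

lemma csdLearner_out_of_reach {S : Set ℕ} {σ : List ℕ} {ans : List Bool} {h : ℕ}
    (hr : csdLearner.Reach S σ ans) (hh : csdStep ans = 2 * h + 1) : csdLearner.Out S σ h ans :=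
  ⟨hr, hh ▸ Part.mem_some _⟩

lemma csdStep_replicate (s : ℕ) : csdStep (List.replicate s true) = 2 * Nat.pair (s + 1) 0 := by
  simp [csdStep]

lemma csdStep_replicate_false (a : ℕ) :
    csdStep (List.replicate a true ++ [false]) = 2 * Nat.pair 0 (pEval (csdLevel a) a) := by
  simp [csdStep, List.idxOf_append, List.drop_append]

lemma csdStep_replicate_false_true (a : ℕ) :
    csdStep (List.replicate a true ++ [false, true]) = 2 * a + 1 := by
  simp [csdStep, List.idxOf_append, List.drop_append]

lemma csdStep_climb (a s : ℕ) :
    csdStep (List.replicate a true ++ false :: false :: List.replicate s true) =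
      if s + 1 < pEval (csdLevel a) a then 2 * Nat.pair 0 (s + 1) else 2 * (a + s) + 1 := by
  simp [csdStep, List.idxOf_append, List.drop_append]

lemma csdStep_climb_false (a s : ℕ) :
    csdStep (List.replicate a true ++ false :: false :: (List.replicate s true ++ [false])) =
      2 * (a + s) + 1 := by
  simp [csdStep, List.idxOf_append, List.drop_append]

lemma csdLearner_reach_replicate_false {S : Set ℕ} {a : ℕ} (hS : ∀ k, Nat.pair k 0 ∈ S ↔ k ≤ a)
    (σ : List ℕ) : csdLearner.Reach S σ (List.replicate a true ++ [false]) := by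
  have hrun : ∀ s ≤ a, csdLearner.Reach S σ (List.replicate s true) := by
    intro s
    induction s with
    | zero => exact fun _ => .nil
    | succ s ih =>
      intro hs
      have := csdLearner_reach_append (ih (by omega)) (csdStep_replicate s)
      rwa [decide_eq_true ((hS _).2 hs), ← List.replicate_succ'] at this
  have := csdLearner_reach_append (hrun a le_rfl) (csdStep_replicate a)
  rwa [decide_eq_false (by simp [hS])] at this

lemma csdLearner_out_Aset (n : ℕ) (σ : List ℕ) :
    csdLearner.Out (Aset n) σ (aCSD n) (List.replicate (aCSD n) true ++ [false, true]) := by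
  have hcol := csdLearner_reach_replicate_false (fun k => pair_zero_mem_Aset (n := n)) σ
  have hquery := csdStep_replicate_false (aCSD n)
  rw [csdLevel_aCSD] at hquery
  have := csdLearner_reach_append hcol hquery
  rw [decide_eq_true (by simp), List.append_assoc] at this
  exact csdLearner_out_of_reach this (csdStep_replicate_false_true _)

lemma csdLearner_reach_climb {n j : ℕ} (hj : j < pEval n (aCSD n)) (σ : List ℕ) :
    ∀ s ≤ j, csdLearner.Reach (Bset n j) σ
      (List.replicate (aCSD n) true ++ false :: false :: List.replicate s true)
  | 0, _ => by
    have hcol := csdLearner_reach_replicate_false (fun k => pair_zero_mem_Bset (n := n) (i := j)) σ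
    have hquery := csdStep_replicate_false (aCSD n)
    rw [csdLevel_aCSD] at hquery
    have := csdLearner_reach_append hcol hquery
    rwa [decide_eq_false (by simp; omega), List.append_assoc] at this
  | s + 1, hs => by
    have hquery := csdStep_climb (aCSD n) s
    rw [csdLevel_aCSD, if_pos (by omega)] at hquery
    have := csdLearner_reach_append (csdLearner_reach_climb hj σ s (by omega)) hquery
    rw [decide_eq_true (by simp; omega)] at this
    simpa [List.replicate_succ'] using this

lemma csdLearner_out_Bset {n j : ℕ} (hj : j < pEval n (aCSD n)) :
    ∃ ans : List Bool, ans.length ≤ aCSD n + j + 3 ∧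
      ∀ σ, csdLearner.Out (Bset n j) σ (aCSD n + j) ans := by
  have hstep := csdStep_climb (aCSD n) j
  rw [csdLevel_aCSD] at hstep
  by_cases hlast : j + 1 < pEval n (aCSD n)
  · refine ⟨List.replicate (aCSD n) true ++ false :: false :: (List.replicate j true ++ [false]),
      by simp; omega, fun σ => ?_⟩
    rw [if_pos hlast] at hstep
    have := csdLearner_reach_append (csdLearner_reach_climb hj σ j le_rfl) hstep
    rw [decide_eq_false (by simp)] at this
    exact csdLearner_out_of_reach (by simpa using this) (csdStep_climb_false _ j)
  · rw [if_neg hlast] at hstep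
    exact ⟨_, by simp; omega,
      fun σ => csdLearner_out_of_reach (csdLearner_reach_climb hj σ j le_rfl) hstep⟩

lemma exists_csdLearner_out (k : ℕ) :
    ∃ h ans, csdSet h = csdSet k ∧ ans.length ≤ k + 3 ∧
      ∀ σ, csdLearner.Out (csdSet k) σ h ans := by
  rcases csdSet_cases k with ⟨n, hn, hk⟩ | ⟨n, j, hj0, hjP, rfl⟩
  · rw [hk]
    exact ⟨aCSD n, _, csdSet_aCSD n, by simp; omega, csdLearner_out_Aset n⟩
  · obtain ⟨ans, hlen, hout⟩ := csdLearner_out_Bset hjP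
    rw [csdSet_aCSD_add hj0 hjP]
    exact ⟨aCSD n + j, ans, csdSet_aCSD_add hj0 hjP, hlen, hout⟩

theorem prto_csdFamily : PRTO csdFamily := by
  refine ⟨csdLearner, 2 * (Polynomial.X + 6) ^ 2, fun A hA f _ => ?_⟩
  obtain ⟨h, ans, hh, hlen, hout⟩ := exists_csdLearner_out (csdFamily.mi A)
  have hk : csdSet (csdFamily.mi A) = A := Nat.sInf_mem hA
  rw [hk] at hh hout
  refine ⟨h, hh, 0, fun m _ => ⟨ans, hout _⟩, ans, _, hout _, Part.mem_some _, ?_⟩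
  simp only [str, List.range_zero, List.map_nil, List.length_nil, zero_add, Polynomial.eval_mul,
    Polynomial.eval_pow, Polynomial.eval_add, Polynomial.eval_X, Polynomial.eval_ofNat]
  exact Nat.mul_lt_mul_of_pos_left (Nat.pow_lt_pow_left (by omega) (by norm_num)) (by norm_num)

/-! ### Texts and teachers -/

lemma str_isPrefix (f : ℕ → ℕ) {m m' : ℕ} (h : m ≤ m') : str f m <+: str f m' := by
  rw [str, str, ← Nat.add_sub_cancel' h, List.range_add, List.map_append]
  exact List.prefix_append _ _

lemma str_congr {f g : ℕ → ℕ} {N : ℕ} (h : ∀ m < N, f m = g m) : str f N = str g N :=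
  List.map_congr_left fun m hm => h m (List.mem_range.1 hm)

lemma exists_isEnum {A : Set ℕ} (hA : A.Nonempty) : ∃ f, IsEnum f A :=
  let ⟨f, hf⟩ := A.to_countable.exists_eq_range hA
  ⟨f, hf.symm⟩

lemma IsEnum.exists_isEnum_str_eq {g : ℕ → ℕ} {K L : Set ℕ} (hg : IsEnum g K) (hKL : K ⊆ L)
    (N : ℕ) : ∃ f, IsEnum f L ∧ str f N = str g N := by
  obtain ⟨e, he⟩ := exists_isEnum ⟨g 0, hKL (hg ▸ Set.mem_range_self 0)⟩
  refine ⟨fun m => if m < N then g m else e (m - N), ?_, str_congr fun m hm => if_pos hm⟩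
  refine subset_antisymm (Set.range_subset_iff.2 fun m => ?_) fun x hx => ?_
  · split_ifs
    · exact hKL (hg ▸ Set.mem_range_self m)
    · exact he ▸ Set.mem_range_self _
  · obtain ⟨m, rfl⟩ := he.symm ▸ hx
    exact ⟨N + m, by simp⟩

lemma exists_forall_ge_eq_of_isPrefix {α : Type*} {s : ℕ → List α}
    (hs : ∀ ⦃m m'⦄, m ≤ m' → s m <+: s m') {B : ℕ} (hB : ∀ m, (s m).length ≤ B) (n₀ : ℕ) :
    ∃ N, n₀ ≤ N ∧ ∀ m, N ≤ m → s m = s N := by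
  have hbdd : BddAbove (Set.range fun m => (s m).length) := ⟨B, Set.forall_mem_range.2 hB⟩
  obtain ⟨N₁, hN₁⟩ := Nat.sSup_mem (Set.range_nonempty _) hbdd
  have hmax (m : ℕ) : (s m).length ≤ (s N₁).length := by
    rw [show (s N₁).length = _ from hN₁]
    exact le_csSup hbdd ⟨m, rfl⟩
  refine ⟨max n₀ N₁, le_max_left _ _, fun m hm => ((hs hm).eq_of_length ?_).symm⟩
  exact le_antisymm (hs hm).length_le <|
    (hmax m).trans (hs (le_max_right n₀ N₁)).length_le

def IsLockingStage (M : Machine) (T : Teacher) (𝓕 : IndexedFamily) (K : Set ℕ) (g : ℕ → ℕ)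
    (N : ℕ) : Prop :=
  IsEnum g K ∧ (∀ m, N ≤ m → T.t (str g m) = T.t (str g N)) ∧
    ∃ h, 𝓕.F h = K ∧ M.eval (T.t (str g N)) = Part.some h

section TeacherBound

variable {𝓕 : IndexedFamily} {M : Machine} {T : Teacher} {p : Polynomial ℕ} {L : Set ℕ}

theorem PRTTLearnsWith.length_teacher_lt {K : Set ℕ} {g : ℕ → ℕ} {h N : ℕ}
    (hL : PRTTLearnsWith M T p 𝓕) (hLmem : 𝓕.Mem L) (hKL : K ⊂ L) (hg : IsEnum g K)
    (hh : 𝓕.F h = K) (hM : M.eval (T.t (str g N)) = Part.some h) :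
    (T.t (str g N)).length < p.eval (𝓕.mi L) := by
  obtain ⟨f, hf, hfg⟩ := hg.exists_isEnum_str_eq hKL.subset N
  obtain ⟨h', hh', n₀, hsettle, t, ht, htB⟩ := hL L hLmem f hf
  rcases le_or_gt N n₀ with hN | hN
  · calc (T.t (str g N)).length = (T.t (str f N)).length := by rw [hfg]
      _ ≤ (T.t (str f n₀)).length := (T.mono (str_isPrefix f hN)).length_le
      _ ≤ t := M.length_le_time ht
      _ < _ := htB
  · have hM' : M.eval (T.t (str f N)) = Part.some h' := hsettle N hN.le
    rw [hfg, hM, Part.some_inj] at hM'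
    exact absurd (hh.symm.trans (hM' ▸ hh')) hKL.ne

theorem PRTTLearnsWith.exists_isLockingStage {K : Set ℕ} {g : ℕ → ℕ}
    (hL : PRTTLearnsWith M T p 𝓕) (hLmem : 𝓕.Mem L) (hKmem : 𝓕.Mem K) (hKL : K ⊂ L)
    (hg : IsEnum g K) : ∃ N, IsLockingStage M T 𝓕 K g N := by
  obtain ⟨h, hh, n₀, hsettle, -⟩ := hL K hKmem g hg
  have hbound (m : ℕ) : (T.t (str g m)).length ≤ p.eval (𝓕.mi L) :=
    (T.mono (str_isPrefix g (le_max_left m n₀))).length_le.trans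
      (hL.length_teacher_lt hLmem hKL hg hh (hsettle _ (le_max_right m n₀))).le
  obtain ⟨N, hN, hstable⟩ :=
    exists_forall_ge_eq_of_isPrefix (fun m m' hm => T.mono (str_isPrefix g hm)) hbound n₀
  exact ⟨N, hg, hstable, h, hh, hsettle N hN⟩

theorem PRTTLearnsWith.exists_isLockingStage_length_lt {K K' : Set ℕ} {g : ℕ → ℕ} {N : ℕ}
    (hL : PRTTLearnsWith M T p 𝓕) (hLmem : 𝓕.Mem L) (hK'mem : 𝓕.Mem K') (hK'L : K' ⊂ L)
    (hKK' : K ⊂ K') (hN : IsLockingStage M T 𝓕 K g N) :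
    ∃ g' N', IsLockingStage M T 𝓕 K' g' N' ∧
      (T.t (str g N)).length < (T.t (str g' N')).length := by
  obtain ⟨hg, -, h, hh, hM⟩ := hN
  obtain ⟨g', hg', hstr⟩ := hg.exists_isEnum_str_eq hKK'.subset N
  obtain ⟨N', hN'⟩ := hL.exists_isLockingStage hLmem hK'mem hK'L hg'
  have ⟨_, hstable', h', hh', hM'⟩ := hN'
  have hpre : T.t (str g N) <+: T.t (str g' N') := by
    rw [← hstr, ← hstable' _ (le_max_right N N')]
    exact T.mono (str_isPrefix g' (le_max_left N N'))
  have hne : T.t (str g N) ≠ T.t (str g' N') := by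
    intro heq
    rw [heq, hM', Part.some_inj] at hM
    exact hKK'.ne (hh.symm.trans (hM ▸ hh'))
  exact ⟨g', N', hN', lt_of_le_of_ne hpre.length_le fun hlen => hne (hpre.eq_of_length hlen)⟩

theorem PRTTLearnsWith.exists_isLockingStage_le_length {K : ℕ → Set ℕ} {m : ℕ}
    (hL : PRTTLearnsWith M T p 𝓕) (hLmem : 𝓕.Mem L) (hKmem : ∀ i ≤ m, 𝓕.Mem (K i))
    (hKL : ∀ i ≤ m, K i ⊂ L) (hK : ∀ i < m, K i ⊂ K (i + 1)) :
    ∀ i ≤ m, ∃ g N, IsLockingStage M T 𝓕 (K i) g N ∧ i ≤ (T.t (str g N)).length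
  | 0, h0 => by
    obtain ⟨k, hk⟩ := hKmem 0 h0
    obtain ⟨g, hg⟩ := exists_isEnum (hk ▸ 𝓕.nonempty k)
    obtain ⟨N, hN⟩ := hL.exists_isLockingStage hLmem (hKmem 0 h0) (hKL 0 h0) hg
    exact ⟨g, N, hN, Nat.zero_le _⟩
  | i + 1, hi => by
    obtain ⟨g, N, hN, hlen⟩ :=
      hL.exists_isLockingStage_le_length hLmem hKmem hKL hK i (by omega)
    obtain ⟨g', N', hN', hlt⟩ :=
      hL.exists_isLockingStage_length_lt hLmem (hKmem _ hi) (hKL _ hi) (hK i hi) hN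
    exact ⟨g', N', hN', by omega⟩

theorem PRTTLearnsWith.lt_of_ssubset_chain {K : ℕ → Set ℕ} {m : ℕ}
    (hL : PRTTLearnsWith M T p 𝓕) (hLmem : 𝓕.Mem L) (hKmem : ∀ i ≤ m, 𝓕.Mem (K i))
    (hKL : ∀ i ≤ m, K i ⊂ L) (hK : ∀ i < m, K i ⊂ K (i + 1)) : m < p.eval (𝓕.mi L) := by
  obtain ⟨g, N, ⟨hg, -, h, hh, hM⟩, hm⟩ :=
    hL.exists_isLockingStage_le_length hLmem hKmem hKL hK m le_rfl
  exact hm.trans_lt (hL.length_teacher_lt hLmem (hKL m le_rfl) hg hh hM)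

end TeacherBound

theorem not_prtt_csdFamily : ¬ PRTT csdFamily := by
  rintro ⟨M, T, p, hL⟩
  obtain ⟨n, hn⟩ := exists_pEval_eq (p + 2)
  have hP : pEval n (aCSD n) = p.eval (aCSD n) + 2 := by simp [hn]
  have hmi : csdFamily.mi (Aset n) ≤ aCSD n := Nat.sInf_le (csdSet_aCSD n)
  have hchain := hL.lt_of_ssubset_chain (L := Aset n) (K := fun i => Bset n (i + 1))
    (m := p.eval (aCSD n)) ⟨_, csdSet_aCSD n⟩
    (fun i hi => ⟨_, csdSet_aCSD_add i.succ_pos (by omega)⟩)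
    (fun i hi => Bset_ssubset_Aset (by omega)) (fun i _ => Bset_ssubset_Bset_succ n (i + 1))
  exact (p.monotone_eval_nat hmi).not_gt hchain

/-- There is an indexed family `𝓒𝓢𝓓` (the column
self-describing sets), with `F_{a_i} = A_i` and `F_{a_i + j} = B_{i,j}` for
`0 < j < p_i(a_i)`, which is PRT[O]-learnable but not PRT[T]-learnable. -/
theorem stmt4 :
    ∃ 𝓕 : IndexedFamily,
      (∀ i, 𝓕.F (aCSD i) = Aset i) ∧
      (∀ i j, 0 < j → j < pEval i (aCSD i) → 𝓕.F (aCSD i + j) = Bset i j) ∧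
      PRTO 𝓕 ∧ ¬ PRTT 𝓕 :=
  ⟨csdFamily, csdSet_aCSD, fun _ _ => csdSet_aCSD_add, prto_csdFamily, not_prtt_csdFamily⟩

end TeachLearn
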